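/- Let d ∈ ℕ, T,κ ∈ [0,∞), let (Ω,ℱ,ℙ) be a probability space, let ‖·‖ be a norm on ℝ^d, let X^x: [0,T]×Ω → ℝ^d, x ∈ ℝ^d, be stochastic processes which satisfy for all ω ∈ Ω that the map (t,x) ↦ X^x(t,ω) belongs to C^{0,1}([0,T]×ℝ^d,ℝ^d), assume for all R,r ∈ [0,∞) that E[sup_{x∈ℚ^d: ‖x‖≤R} sup_{t∈[0,T]∩ℚ} ‖X^x(t)‖^r] < ∞, and assume for all x,h ∈ ℝ^d, t ∈ [0,T], ω ∈ Ω that ‖(∂/∂x X^x(t,ω))(h)‖ ≤ ‖h‖ + κ·∫₀^t (1+‖X^x(s,ω)‖^κ)·‖(∂/∂x X^x(s,ω))(h)‖ ds. Then for all R,q ∈ [0,∞) there exists c ∈ [0,∞) such that for all h ∈ ℝ^d with 0 < ‖h‖ < 1 it holds that sup_{x: ‖x‖≤R} sup_{t∈[0,T]} E[‖X^{x+h}(t) − X^x(t)‖] ≤ c·|ln(‖h‖)|^{−q}. -/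

import Mathlib

/-!
Fix `R` and let `M ω` be the maximum of `‖X^y(t, ω)‖` over `t ∈ [0, T]`, `‖y‖ ≤ R + 1`. By
continuity it is also the supremum over rational points, so all moments of `M` are finite.
Grönwall's inequality bounds the derivative in `x` by `exp (κ T (1 + M^κ))`, so pathwise the
increment is at most both `2 M` and `C ‖h‖ exp (κ T (1 + M^κ))`. Write `‖h‖ = e^{-L}`. On the
event `κ T M^κ ≤ L / 2` the second bound is at most `C e^{κ T} e^{-L/2}`; off it,
`2 M ≤ 2 (2 κ T / L)^q M^{1 + κ q}`. Both are `O(L^{-q})` in expectation.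
-/

open MeasureTheory ProbabilityTheory Filter
open scoped ENNReal NNReal

noncomputable section

/-- `N` is a norm on the real vector space `E`. -/
def IsNorm {E : Type*} [AddCommGroup E] [Module ℝ E] (N : E → ℝ) : Prop :=
  (∀ x, N x = 0 ↔ x = 0) ∧ (∀ (a : ℝ) (x : E), N (a • x) = |a| * N x) ∧
    ∀ x y, N (x + y) ≤ N x + N y

/-- the rational points of the interval `[0,T]`. -/
def ratIcc (T : ℝ) : Set ℝ := Set.Icc 0 T ∩ Set.range ((↑) : ℚ → ℝ)

/-- the points of `ℚ^d` whose `N`-norm is at most `R`. -/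
def ratBall (d : ℕ) (N : (Fin d → ℝ) → ℝ) (R : ℝ) : Set (Fin d → ℝ) :=
  {x | (∀ i, ∃ q : ℚ, (q : ℝ) = x i) ∧ N x ≤ R}

/-- `g` belongs to `C^{0,1}([0,T] × ℝ^d, ℝ^d)`: `g` is continuous on
`[0,T] × ℝ^d`, for every `t ∈ [0,T]` the map `x ↦ g t x` is differentiable,
and `(t,x) ↦ ∂/∂x g(t,x)` is continuous on `[0,T] × ℝ^d`. -/
def IsC01 (d : ℕ) (T : ℝ) (g : ℝ → (Fin d → ℝ) → (Fin d → ℝ)) : Prop :=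
  ContinuousOn (fun p : ℝ × (Fin d → ℝ) => g p.1 p.2) (Set.Icc 0 T ×ˢ Set.univ) ∧
  (∀ t ∈ Set.Icc (0 : ℝ) T, Differentiable ℝ (g t)) ∧
  ContinuousOn (fun p : ℝ × (Fin d → ℝ) => fderiv ℝ (g p.1) p.2)
    (Set.Icc 0 T ×ˢ Set.univ)

open Set Real

namespace IsNorm

section Module

variable {E : Type*} [AddCommGroup E] [Module ℝ E] {N : E → ℝ}

lemma map_zero (hN : IsNorm N) : N 0 = 0 := (hN.1 0).2 rfl

lemma map_neg (hN : IsNorm N) (x : E) : N (-x) = N x := by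
  simpa using hN.2.1 (-1) x

lemma nonneg (hN : IsNorm N) (x : E) : 0 ≤ N x := by
  have h := hN.2.2 x (-x)
  rw [add_neg_cancel, hN.map_zero, hN.map_neg] at h
  linarith

lemma sub_le (hN : IsNorm N) (x y : E) : N (x - y) ≤ N x + N y := by
  simpa [sub_eq_add_neg, hN.map_neg] using hN.2.2 x (-y)

end Module

variable {d : ℕ} {N : (Fin d → ℝ) → ℝ}

lemma exists_le_mul_norm (hN : IsNorm N) : ∃ C, 0 ≤ C ∧ ∀ x, N x ≤ C * ‖x‖ := by
  classical
  set e : Fin d → Fin d → ℝ := fun i j => if i = j then 1 else 0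
  refine ⟨∑ i, N (e i), Finset.sum_nonneg fun i _ => hN.nonneg _, fun x => ?_⟩
  calc N x = N (∑ i, x i • e i) := by rw [← pi_eq_sum_univ x]
    _ ≤ ∑ i, N (x i • e i) := Finset.le_sum_of_subadditive N hN.map_zero.le hN.2.2 _ _
    _ = ∑ i, |x i| * N (e i) := by simp only [hN.2.1]
    _ ≤ ∑ i, ‖x‖ * N (e i) := by
        gcongr with i
        · exact hN.nonneg _
        · exact (Real.norm_eq_abs (x i)).symm.le.trans (norm_le_pi_norm x i)
    _ = (∑ i, N (e i)) * ‖x‖ := by rw [← Finset.mul_sum, mul_comm]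

lemma continuous (hN : IsNorm N) : Continuous N := by
  obtain ⟨C, hC, hle⟩ := hN.exists_le_mul_norm
  refine (LipschitzWith.of_le_add_mul (K := ⟨C, hC⟩) fun x y => ?_).continuous
  calc N x = N ((x - y) + y) := by rw [sub_add_cancel]
    _ ≤ N y + C * dist x y := by rw [dist_eq_norm]; linarith [hN.2.2 (x - y) y, hle (x - y)]

lemma exists_norm_le_mul (hN : IsNorm N) : ∃ C, 0 ≤ C ∧ ∀ x, ‖x‖ ≤ C * N x := by
  rcases isEmpty_or_nonempty (Fin d) with hd | hd
  · exact ⟨0, le_rfl, fun x => by simp [Subsingleton.elim x 0]⟩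
  obtain ⟨x₀, hx₀, hmin⟩ := (isCompact_sphere (0 : Fin d → ℝ) 1).exists_isMinOn
    (NormedSpace.sphere_nonempty.2 zero_le_one) hN.continuous.continuousOn
  have hx₀0 : x₀ ≠ 0 := ne_zero_of_mem_unit_sphere ⟨x₀, hx₀⟩
  have hpos : 0 < N x₀ := (hN.nonneg x₀).lt_of_ne fun h => hx₀0 ((hN.1 x₀).1 h.symm)
  refine ⟨(N x₀)⁻¹, by positivity, fun x => ?_⟩
  rcases eq_or_ne x 0 with rfl | hx
  · simp [hN.map_zero]
  have hnx : 0 < ‖x‖ := norm_pos_iff.2 hx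
  have hsph : ‖x‖⁻¹ • x ∈ Metric.sphere (0 : Fin d → ℝ) 1 := by
    simp [norm_smul, inv_mul_cancel₀ hnx.ne']
  have h := hmin hsph
  rw [mem_ofPred_eq, hN.2.1, abs_of_pos (inv_pos.2 hnx)] at h
  rw [inv_mul_eq_div, le_div_iff₀ hpos]
  calc ‖x‖ * N x₀ ≤ ‖x‖ * (‖x‖⁻¹ * N x) := by gcongr
    _ = N x := by field_simp

lemma isCompact_setOf_le (hN : IsNorm N) (R : ℝ) : IsCompact {x | N x ≤ R} := by
  obtain ⟨C, hC, hle⟩ := hN.exists_norm_le_mul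
  refine Metric.isCompact_of_isClosed_isBounded (isClosed_le hN.continuous continuous_const) ?_
  exact isBounded_iff_forall_norm_le.2 ⟨C * R, fun x hx => (hle x).trans (by gcongr; exact hx)⟩

lemma setOf_le_subset_closure_ratBall (hN : IsNorm N) {R R' : ℝ} (hR : R < R') :
    {x | N x ≤ R} ⊆ closure (ratBall d N R') := by
  have hdense : DenseRange (Pi.map fun _ : Fin d => ((↑) : ℚ → ℝ)) :=
    DenseRange.piMap fun _ => Rat.denseRange_cast
  calc {x | N x ≤ R} ⊆ {x | N x < R'} := fun x hx => lt_of_le_of_lt hx hR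
    _ ⊆ closure ({x | N x < R'} ∩ range (Pi.map fun _ : Fin d => ((↑) : ℚ → ℝ))) :=
        hdense.open_subset_closure_inter (isOpen_lt hN.continuous continuous_const)
    _ ⊆ closure (ratBall d N R') := by
        refine closure_mono ?_
        rintro _ ⟨hx, v, rfl⟩
        exact ⟨fun i => ⟨v i, rfl⟩, le_of_lt hx⟩

end IsNorm

lemma Icc_subset_closure_ratIcc {T : ℝ} (hT : 0 ≤ T) : Icc 0 T ⊆ closure (ratIcc T) := by
  rcases hT.eq_or_lt with rfl | hT
  · rw [Icc_self, singleton_subset_iff]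
    exact subset_closure ⟨left_mem_Icc.2 le_rfl, 0, Rat.cast_zero⟩
  · rw [← closure_Ioo hT.ne]
    refine closure_minimal ((Rat.denseRange_cast.open_subset_closure_inter isOpen_Ioo).trans ?_)
      isClosed_closure
    exact closure_mono (inter_subset_inter_left _ Ioo_subset_Icc_self)

lemma image_add_sub_le_of_fderiv_apply_le {E F : Type*} [NormedAddCommGroup E] [NormedSpace ℝ E]
    [NormedAddCommGroup F] [NormedSpace ℝ F] {N : F → ℝ} {C₁ C₂ b : ℝ} (hC₁ : 0 ≤ C₁)
    (hC₂ : 0 ≤ C₂) (hNle : ∀ v, N v ≤ C₁ * ‖v‖) (hle : ∀ v, ‖v‖ ≤ C₂ * N v) {f : E → F}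
    (hf : Differentiable ℝ f) {x h : E}
    (hb : ∀ s ∈ Icc (0 : ℝ) 1, N (fderiv ℝ f (x + s • h) h) ≤ b) :
    N (f (x + h) - f x) ≤ C₁ * C₂ * b := by
  have hseg : ∀ s ∈ Icc (0 : ℝ) 1, HasDerivWithinAt (fun s : ℝ => f (x + s • h))
      (fderiv ℝ f (x + s • h) h) (Icc 0 1) s := fun s _ => by
    have hline : HasDerivAt (fun s : ℝ => x + s • h) h s := by
      simpa using ((hasDerivAt_id s).smul_const h).const_add x
    exact ((hf _).hasFDerivAt.comp_hasDerivAt s hline).hasDerivWithinAt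
  have hmvt := norm_image_sub_le_of_norm_deriv_le_segment_01' hseg fun s hs =>
    (hle _).trans (mul_le_mul_of_nonneg_left (hb s (Ico_subset_Icc_self hs)) hC₂)
  simp only [one_smul, zero_smul, add_zero] at hmvt
  calc N (f (x + h) - f x) ≤ C₁ * ‖f (x + h) - f x‖ := hNle _
    _ ≤ C₁ * (C₂ * b) := by gcongr
    _ = C₁ * C₂ * b := by ring

lemma add_mul_gronwallBound_zero (a B t : ℝ) :
    a + B * gronwallBound 0 B a t = a * exp (B * t) := by
  rcases eq_or_ne B 0 with rfl | hB
  · simp [gronwallBound_K0]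
  · rw [gronwallBound_of_K_ne_0 hB]
    field_simp
    ring

theorem le_mul_exp_of_le_add_mul_integral {u : ℝ → ℝ} {a B T : ℝ} (hT : 0 ≤ T) (hB : 0 ≤ B)
    (hu : ContinuousOn u (Icc 0 T))
    (hle : ∀ t ∈ Icc 0 T, u t ≤ a + B * ∫ s in (0 : ℝ)..t, u s) {t : ℝ} (ht : t ∈ Icc 0 T) :
    u t ≤ a * exp (B * t) := by
  -- the continuous extension `v` of `u` has a primitive that is differentiable everywhere
  set v := IccExtend hT ((Icc 0 T).domRestrict u)
  have hv : Continuous v := (continuousOn_iff_continuous_domRestrict.1 hu).Icc_extend'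
  have hvu : ∀ s ∈ Icc 0 T, v s = u s := fun s hs => IccExtend_of_mem _ _ hs
  have hF : ∀ r, HasDerivAt (fun r => ∫ s in (0 : ℝ)..r, v s) (v r) r := fun r =>
    intervalIntegral.integral_hasDerivAt_right (hv.intervalIntegrable _ _)
      hv.aestronglyMeasurable.stronglyMeasurableAtFilter hv.continuousAt
  have hFu : ∀ r ∈ Icc 0 T, ∫ s in (0 : ℝ)..r, v s = ∫ s in (0 : ℝ)..r, u s := fun r hr =>
    intervalIntegral.integral_congr fun s hs => by
      rw [uIcc_of_le hr.1] at hs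
      exact hvu s ⟨hs.1, hs.2.trans hr.2⟩
  have hgron := le_gronwallBound_of_liminf_deriv_right_le (δ := 0) (K := B) (ε := a)
    (fun r _ => (hF r).continuousAt.continuousWithinAt)
    (fun r _ _ hr => (hF r).hasDerivWithinAt.liminf_right_slope_le hr) (by simp)
    (fun r hr => by
      rw [hvu r (Ico_subset_Icc_self hr), hFu r (Ico_subset_Icc_self hr)]
      linarith [hle r (Ico_subset_Icc_self hr)]) t ht
  calc u t ≤ a + B * ∫ s in (0 : ℝ)..t, u s := hle t ht
    _ ≤ a + B * gronwallBound 0 B a (t - 0) := by rw [← hFu t ht]; gcongr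
    _ = a * exp (B * t) := by rw [sub_zero, add_mul_gronwallBound_zero]

lemma rpow_le_div_rpow_mul_exp {q b L : ℝ} (hq : 0 ≤ q) (hb : 0 < b) (hL : 0 ≤ L) :
    L ^ q ≤ (q / b) ^ q * exp (b * L) := by
  rcases hq.eq_or_lt with rfl | hq
  · simpa using one_le_exp (by positivity : 0 ≤ b * L)
  calc L ^ q = ((q / b) * (b * L / q)) ^ q := by congr 1; field_simp
    _ = (q / b) ^ q * (b * L / q) ^ q := mul_rpow (by positivity) (by positivity)
    _ ≤ (q / b) ^ q * exp (b * L / q) ^ q := by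
        gcongr
        linarith [add_one_le_exp (b * L / q)]
    _ = (q / b) ^ q * exp (b * L) := by rw [← exp_mul, div_mul_cancel₀ _ hq.ne']

lemma le_add_mul_rpow_of_le_two_mul_of_le_mul_exp {y m C η a κ q : ℝ} (hm : 0 ≤ m) (hC : 0 ≤ C)
    (hη0 : 0 < η) (hη1 : η < 1) (ha : 0 ≤ a) (hκ : 0 ≤ κ) (hq : 0 ≤ q)
    (hy_two : y ≤ 2 * m) (hy_exp : y ≤ C * η * exp (a * (1 + m ^ κ))) :
    y ≤ C * exp a * (2 * q) ^ q * |log η| ^ (-q)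
      + 2 * (2 * a) ^ q * |log η| ^ (-q) * m ^ (1 + κ * q) := by
  set L := |log η|
  have hlog : log η < 0 := log_neg hη0 hη1
  have hL : 0 < L := abs_pos.2 hlog.ne
  have hη : η = exp (-L) := by rw [show L = -log η from abs_of_neg hlog, neg_neg, exp_log hη0]
  have hLq : L ^ (-q) * L ^ q = 1 := by rw [← rpow_add hL, neg_add_cancel, rpow_zero]
  have hmκ : 0 ≤ m ^ κ := rpow_nonneg hm κ
  rcases le_or_gt (a * m ^ κ) (L / 2) with hsmall | hlarge
  · have hexp : exp (-(L / 2)) ≤ (2 * q) ^ q * L ^ (-q) := by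
      have h := rpow_le_div_rpow_mul_exp hq (by norm_num : (0 : ℝ) < 1 / 2) hL.le
      rw [div_div_eq_mul_div, div_one, mul_comm q] at h
      calc exp (-(L / 2)) = L ^ (-q) * (L ^ q * exp (-(L / 2))) := by rw [← mul_assoc, hLq, one_mul]
        _ ≤ L ^ (-q) * ((2 * q) ^ q * exp (1 / 2 * L) * exp (-(L / 2))) := by gcongr
        _ = (2 * q) ^ q * L ^ (-q) := by
            rw [mul_assoc, ← exp_add, show 1 / 2 * L + -(L / 2) = 0 by ring, exp_zero]; ring
    calc y ≤ C * exp a * (exp (-L) * exp (a * m ^ κ)) := by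
          rw [hη, mul_add, mul_one, exp_add] at hy_exp; linarith
      _ ≤ C * exp a * exp (-(L / 2)) := by
          rw [← exp_add]; gcongr; linarith
      _ ≤ C * exp a * ((2 * q) ^ q * L ^ (-q)) := by gcongr
      _ ≤ _ := by
          have : 0 ≤ 2 * (2 * a) ^ q * L ^ (-q) * m ^ (1 + κ * q) := by positivity
          linarith
  · have hpow : L ^ q ≤ (2 * a) ^ q * (m ^ κ) ^ q := by
      rw [← mul_rpow (by positivity) hmκ]
      exact rpow_le_rpow hL.le (by linarith) hq
    have hmp : m ^ (1 + κ * q) = m * (m ^ κ) ^ q := by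
      rw [rpow_add' hm (by positivity), rpow_one, rpow_mul hm]
    calc y ≤ 2 * (m * (L ^ (-q) * L ^ q)) := by rw [hLq, mul_one]; exact hy_two
      _ ≤ 2 * (m * (L ^ (-q) * ((2 * a) ^ q * (m ^ κ) ^ q))) := by gcongr
      _ = 2 * (2 * a) ^ q * L ^ (-q) * m ^ (1 + κ * q) := by rw [hmp]; ring
      _ ≤ _ := by
          have : 0 ≤ C * exp a * (2 * q) ^ q * L ^ (-q) := by positivity
          linarith

lemma lintegral_ofReal_le_of_le_add_mul {Ω : Type*} [MeasurableSpace Ω] {μ : Measure Ω}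
    [IsProbabilityMeasure μ] {f g : Ω → ℝ} {a b : ℝ} (ha : 0 ≤ a) (hb : 0 ≤ b)
    (hg : ∫⁻ ω, ENNReal.ofReal (g ω) ∂μ ≠ ⊤) (hfg : ∀ ω, f ω ≤ a + b * g ω) :
    ∫⁻ ω, ENNReal.ofReal (f ω) ∂μ ≤
      ENNReal.ofReal (a + b * (∫⁻ ω, ENNReal.ofReal (g ω) ∂μ).toReal) := by
  calc ∫⁻ ω, ENNReal.ofReal (f ω) ∂μ
      ≤ ∫⁻ ω, (ENNReal.ofReal a + ENNReal.ofReal b * ENNReal.ofReal (g ω)) ∂μ :=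
        lintegral_mono fun ω => (ENNReal.ofReal_le_ofReal (hfg ω)).trans
          (ENNReal.ofReal_add_le.trans_eq (by rw [ENNReal.ofReal_mul hb]))
    _ = ENNReal.ofReal a + ENNReal.ofReal b * ∫⁻ ω, ENNReal.ofReal (g ω) ∂μ := by
        rw [lintegral_add_left measurable_const, lintegral_const, measure_univ, mul_one,
          lintegral_const_mul' _ _ ENNReal.ofReal_ne_top]
    _ = _ := by
        rw [ENNReal.ofReal_add ha (by positivity), ENNReal.ofReal_mul hb, ENNReal.ofReal_toReal hg]

def supNormOn {d : ℕ} (N : (Fin d → ℝ) → ℝ) (T R : ℝ) (g : ℝ → (Fin d → ℝ) → (Fin d → ℝ)) : ℝ :=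
  sSup ((fun p : ℝ × (Fin d → ℝ) => N (g p.1 p.2)) '' (Icc 0 T ×ˢ {x | N x ≤ R}))

namespace IsC01

variable {d : ℕ} {N : (Fin d → ℝ) → ℝ} {T R κ : ℝ} {g : ℝ → (Fin d → ℝ) → (Fin d → ℝ)}

lemma continuousOn_apply (hg : IsC01 d T g) (x : Fin d → ℝ) :
    ContinuousOn (fun s => g s x) (Icc 0 T) :=
  hg.1.comp (continuous_id.prodMk continuous_const).continuousOn fun _ hs => ⟨hs, mem_univ x⟩

lemma continuousOn_fderiv_apply (hg : IsC01 d T g) (x v : Fin d → ℝ) :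
    ContinuousOn (fun s => fderiv ℝ (g s) x v) (Icc 0 T) :=
  (hg.2.2.comp (continuous_id.prodMk continuous_const).continuousOn
    fun _ hs => ⟨hs, mem_univ x⟩).clm_apply continuousOn_const

lemma continuousOn_norm (hN : IsNorm N) (hg : IsC01 d T g) :
    ContinuousOn (fun p : ℝ × (Fin d → ℝ) => N (g p.1 p.2)) (Icc 0 T ×ˢ univ) :=
  hN.continuous.comp_continuousOn hg.1

lemma le_supNormOn (hN : IsNorm N) (hg : IsC01 d T g) {x : Fin d → ℝ} {t : ℝ} (hx : N x ≤ R)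
    (ht : t ∈ Icc 0 T) : N (g t x) ≤ supNormOn N T R g :=
  le_csSup ((isCompact_Icc.prod (hN.isCompact_setOf_le R)).bddAbove_image
    ((hg.continuousOn_norm hN).mono (prod_mono subset_rfl (subset_univ _)))) ⟨(t, x), ⟨ht, hx⟩, rfl⟩

lemma supNormOn_nonneg (hN : IsNorm N) (hg : IsC01 d T g) (hT : 0 ≤ T) (hR : 0 ≤ R) :
    0 ≤ supNormOn N T R g :=
  (hN.nonneg _).trans (hg.le_supNormOn hN (by rwa [hN.map_zero]) ⟨le_rfl, hT⟩ (x := 0))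

lemma norm_sub_le_two_mul_supNormOn (hN : IsNorm N) (hg : IsC01 d T g) {x y : Fin d → ℝ}
    {t : ℝ} (hx : N x ≤ R) (hy : N y ≤ R) (ht : t ∈ Icc 0 T) :
    N (g t y - g t x) ≤ 2 * supNormOn N T R g := by
  linarith [hN.sub_le (g t y) (g t x), hg.le_supNormOn hN hx ht, hg.le_supNormOn hN hy ht]

lemma ofReal_supNormOn_rpow_le (hN : IsNorm N) (hg : IsC01 d T g) (hT : 0 ≤ T) (hR : 0 ≤ R)
    {R' : ℝ} (hRR' : R < R') {r : ℝ} (hr : 0 ≤ r) :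
    ENNReal.ofReal (supNormOn N T R g ^ r) ≤
      ⨆ x ∈ ratBall d N R', ⨆ t ∈ ratIcc T, ENNReal.ofReal (N (g t x) ^ r) := by
  have hne : (Icc 0 T ×ˢ {x | N x ≤ R}).Nonempty :=
    ⟨(0, 0), left_mem_Icc.2 hT, show N 0 ≤ R by rwa [hN.map_zero]⟩
  obtain ⟨p, hp, hpmax⟩ := ((isCompact_Icc.prod (hN.isCompact_setOf_le R)).image_of_continuousOn
    ((hg.continuousOn_norm hN).mono (prod_mono subset_rfl (subset_univ _)))).sSup_mem
    (hne.image _)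
  have hcl : p ∈ closure (ratIcc T ×ˢ ratBall d N R') := by
    rw [closure_prod_eq]
    exact ⟨Icc_subset_closure_ratIcc hT hp.1, hN.setOf_le_subset_closure_ratBall hRR' hp.2⟩
  have hcont : ContinuousWithinAt (fun p : ℝ × (Fin d → ℝ) => ENNReal.ofReal (N (g p.1 p.2) ^ r))
      (ratIcc T ×ˢ ratBall d N R') p :=
    ((ENNReal.continuous_ofReal.comp_continuousOn ((hg.continuousOn_norm hN).rpow_const
      fun _ _ => Or.inr hr)) p ⟨hp.1, mem_univ _⟩).mono
      (prod_mono inter_subset_left (subset_univ _))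
  rw [supNormOn, ← hpmax]
  refine closure_minimal ?_ isClosed_Iic (hcont.mem_closure_image hcl)
  rintro _ ⟨⟨t, x⟩, ⟨ht, hx⟩, rfl⟩
  exact le_iSup₂_of_le (f := fun x _ => ⨆ t ∈ ratIcc T, ENNReal.ofReal (N (g t x) ^ r)) x hx
    (le_iSup₂_of_le (f := fun t _ => ENNReal.ofReal (N (g t x) ^ r)) t ht le_rfl)

lemma norm_fderiv_apply_le (hN : IsNorm N) (hg : IsC01 d T g) (hT : 0 ≤ T) (hκ : 0 ≤ κ)
    {x v : Fin d → ℝ} {m : ℝ} (hm : ∀ s ∈ Icc 0 T, N (g s x) ≤ m)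
    (hder : ∀ t ∈ Icc 0 T, N (fderiv ℝ (g t) x v) ≤
      N v + κ * ∫ s in (0 : ℝ)..t, (1 + N (g s x) ^ κ) * N (fderiv ℝ (g s) x v))
    {t : ℝ} (ht : t ∈ Icc 0 T) :
    N (fderiv ℝ (g t) x v) ≤ N v * exp (κ * T * (1 + m ^ κ)) := by
  set u := fun s => N (fderiv ℝ (g s) x v)
  have hu : ContinuousOn u (Icc 0 T) :=
    hN.continuous.comp_continuousOn (hg.continuousOn_fderiv_apply x v)
  have hX : ContinuousOn (fun s => N (g s x)) (Icc 0 T) :=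
    hN.continuous.comp_continuousOn (hg.continuousOn_apply x)
  have hm0 : 0 ≤ m := (hN.nonneg _).trans (hm 0 ⟨le_rfl, hT⟩)
  have hB : 0 ≤ κ * (1 + m ^ κ) := by positivity
  have hint : ∀ t ∈ Icc 0 T, u t ≤ N v + κ * (1 + m ^ κ) * ∫ s in (0 : ℝ)..t, u s := by
    intro t ht
    have hsub : uIcc 0 t ⊆ Icc 0 T := by
      rw [uIcc_of_le ht.1]; exact Icc_subset_Icc le_rfl ht.2
    have hmono : ∫ s in (0 : ℝ)..t, (1 + N (g s x) ^ κ) * u s ≤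
        ∫ s in (0 : ℝ)..t, (1 + m ^ κ) * u s := by
      refine intervalIntegral.integral_mono_on ht.1 ?_ ?_ fun s hs => ?_
      · exact ((continuousOn_const.add (hX.rpow_const fun _ _ => Or.inr hκ)).mul hu).mono hsub
          |>.intervalIntegrable
      · exact (continuousOn_const.mul hu).mono hsub |>.intervalIntegrable
      · gcongr
        · exact hN.nonneg _
        · exact hN.nonneg _
        · exact hm s ⟨hs.1, hs.2.trans ht.2⟩
    calc u t ≤ N v + κ * ∫ s in (0 : ℝ)..t, (1 + N (g s x) ^ κ) * u s := hder t ht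
      _ ≤ N v + κ * ∫ s in (0 : ℝ)..t, (1 + m ^ κ) * u s := by gcongr
      _ = N v + κ * (1 + m ^ κ) * ∫ s in (0 : ℝ)..t, u s := by
          rw [intervalIntegral.integral_const_mul, mul_assoc]
  calc u t ≤ N v * exp (κ * (1 + m ^ κ) * t) := le_mul_exp_of_le_add_mul_integral hT hB hu hint ht
    _ ≤ N v * exp (κ * T * (1 + m ^ κ)) := by
        refine mul_le_mul_of_nonneg_left (exp_le_exp.2 ?_) (hN.nonneg _)
        nlinarith [mul_le_mul_of_nonneg_left ht.2 hB]

lemma norm_sub_le_mul_exp (hN : IsNorm N) (hg : IsC01 d T g) (hT : 0 ≤ T) (hκ : 0 ≤ κ)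
    {C₁ C₂ : ℝ} (hC₁ : 0 ≤ C₁) (hC₂ : 0 ≤ C₂) (hNle : ∀ v, N v ≤ C₁ * ‖v‖)
    (hle : ∀ v, ‖v‖ ≤ C₂ * N v)
    (hder : ∀ y v, ∀ t ∈ Icc 0 T, N (fderiv ℝ (g t) y v) ≤
      N v + κ * ∫ s in (0 : ℝ)..t, (1 + N (g s y) ^ κ) * N (fderiv ℝ (g s) y v))
    {x h : Fin d → ℝ} {t : ℝ} (hx : N x ≤ R) (hh : N h ≤ 1) (ht : t ∈ Icc 0 T) :
    N (g t (x + h) - g t x) ≤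
      C₁ * C₂ * N h * exp (κ * T * (1 + supNormOn N T (R + 1) g ^ κ)) := by
  rw [mul_assoc _ (N h)]
  refine image_add_sub_le_of_fderiv_apply_le hC₁ hC₂ hNle hle (hg.2.1 t ht) fun s hs => ?_
  have hxs : N (x + s • h) ≤ R + 1 := by
    have := hN.2.2 x (s • h)
    rw [hN.2.1, abs_of_nonneg hs.1] at this
    nlinarith [hs.2, hN.nonneg h]
  exact hg.norm_fderiv_apply_le hN hT hκ (fun s' hs' => hg.le_supNormOn hN hxs hs') (hder _ h) ht

end IsC01

theorem conditional_log_hoelder_general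
    (d : ℕ) (T κ : ℝ) (hT : 0 ≤ T) (hκ : 0 ≤ κ)
    {Ω : Type*} [MeasurableSpace Ω] (P : Measure Ω) [IsProbabilityMeasure P]
    (Nd : (Fin d → ℝ) → ℝ) (hNd : IsNorm Nd)
    (X : (Fin d → ℝ) → ℝ → Ω → (Fin d → ℝ))
    (hXC01 : ∀ ω, IsC01 d T (fun t x => X x t ω))
    (hmom : ∀ R r : ℝ, 0 ≤ R → 0 ≤ r →
      (∫⁻ ω, (⨆ x ∈ ratBall d Nd R, ⨆ t ∈ ratIcc T,
        ENNReal.ofReal (Nd (X x t ω) ^ r)) ∂P) < ⊤)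
    (hder : ∀ x h : Fin d → ℝ, ∀ t ∈ Set.Icc (0 : ℝ) T, ∀ ω,
      Nd (fderiv ℝ (fun y => X y t ω) x h) ≤
        Nd h + κ * ∫ s in (0 : ℝ)..t,
          (1 + Nd (X x s ω) ^ κ) * Nd (fderiv ℝ (fun y => X y s ω) x h)) :
    ∀ R q : ℝ, 0 ≤ R → 0 ≤ q → ∃ c : ℝ, 0 ≤ c ∧
      ∀ h : Fin d → ℝ, 0 < Nd h → Nd h < 1 →
        ∀ x : Fin d → ℝ, Nd x ≤ R → ∀ t ∈ Set.Icc (0 : ℝ) T,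
          (∫⁻ ω, ENNReal.ofReal (Nd (X (x + h) t ω - X x t ω)) ∂P) ≤
            ENNReal.ofReal (c * |Real.log (Nd h)| ^ (-q)) := by
  intro R q hR hq
  obtain ⟨C₁, hC₁, hNle⟩ := hNd.exists_le_mul_norm
  obtain ⟨C₂, hC₂, hle⟩ := hNd.exists_norm_le_mul
  set M : Ω → ℝ := fun ω => supNormOn Nd T (R + 1) fun t x => X x t ω
  set m := ∫⁻ ω, ENNReal.ofReal (M ω ^ (1 + κ * q)) ∂P
  have hm : m ≠ ⊤ := ((lintegral_mono fun ω => (hXC01 ω).ofReal_supNormOn_rpow_le hNd hT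
    (by linarith) (lt_add_one _) (by positivity)).trans_lt
    (hmom _ _ (by linarith) (by positivity))).ne
  refine ⟨C₁ * C₂ * exp (κ * T) * (2 * q) ^ q + 2 * (2 * (κ * T)) ^ q * m.toReal,
    by positivity, fun h hh0 hh1 x hx t ht => ?_⟩
  have hxh : Nd (x + h) ≤ R + 1 := (hNd.2.2 x h).trans (by linarith)
  have hpath : ∀ ω, Nd (X (x + h) t ω - X x t ω) ≤
      C₁ * C₂ * exp (κ * T) * (2 * q) ^ q * |log (Nd h)| ^ (-q)
        + 2 * (2 * (κ * T)) ^ q * |log (Nd h)| ^ (-q) * M ω ^ (1 + κ * q) := fun ω =>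
    le_add_mul_rpow_of_le_two_mul_of_le_mul_exp
      ((hXC01 ω).supNormOn_nonneg hNd hT (by linarith)) (by positivity) hh0 hh1 (by positivity)
      hκ hq
      ((hXC01 ω).norm_sub_le_two_mul_supNormOn hNd (by linarith) hxh ht)
      ((hXC01 ω).norm_sub_le_mul_exp hNd hT hκ hC₁ hC₂ hNle hle (fun y v s hs => hder y v s hs ω)
        hx hh1.le ht)
  calc _ ≤ ENNReal.ofReal (C₁ * C₂ * exp (κ * T) * (2 * q) ^ q * |log (Nd h)| ^ (-q)
          + 2 * (2 * (κ * T)) ^ q * |log (Nd h)| ^ (-q) * m.toReal) :=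
        lintegral_ofReal_le_of_le_add_mul (by positivity) (by positivity) hm hpath
    _ = _ := by congr 1; ring

/-- **Lemma (conditional sub-Hölder continuity with respect to the initial
value).** -/
theorem conditional_log_hoelder
    (d : ℕ) (hd : 0 < d) (T κ : ℝ) (hT : 0 ≤ T) (hκ : 0 ≤ κ)
    {Ω : Type*} [MeasurableSpace Ω] (P : Measure Ω) [IsProbabilityMeasure P]
    (Nd : (Fin d → ℝ) → ℝ) (hNd : IsNorm Nd)
    (X : (Fin d → ℝ) → ℝ → Ω → (Fin d → ℝ))
    (hXmeas : ∀ x : Fin d → ℝ, ∀ t ∈ Set.Icc (0 : ℝ) T,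
      Measurable (fun ω => X x t ω))
    (hXC01 : ∀ ω, IsC01 d T (fun t x => X x t ω))
    (hmom : ∀ R r : ℝ, 0 ≤ R → 0 ≤ r →
      (∫⁻ ω, (⨆ x ∈ ratBall d Nd R, ⨆ t ∈ ratIcc T,
        ENNReal.ofReal (Nd (X x t ω) ^ r)) ∂P) < ⊤)
    (hder : ∀ x h : Fin d → ℝ, ∀ t ∈ Set.Icc (0 : ℝ) T, ∀ ω,
      Nd (fderiv ℝ (fun y => X y t ω) x h) ≤
        Nd h + κ * ∫ s in (0 : ℝ)..t,
          (1 + Nd (X x s ω) ^ κ) * Nd (fderiv ℝ (fun y => X y s ω) x h)) :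
    ∀ R q : ℝ, 0 ≤ R → 0 ≤ q → ∃ c : ℝ, 0 ≤ c ∧
      ∀ h : Fin d → ℝ, 0 < Nd h → Nd h < 1 →
        ∀ x : Fin d → ℝ, Nd x ≤ R → ∀ t ∈ Set.Icc (0 : ℝ) T,
          (∫⁻ ω, ENNReal.ofReal (Nd (X (x + h) t ω - X x t ω)) ∂P) ≤
            ENNReal.ofReal (c * |Real.log (Nd h)| ^ (-q)) :=
  conditional_log_hoelder_general d T κ hT hκ P Nd hNd X hXC01 hmom hder
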